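/- arXiv:2002.11657 — 2 statements merged into one kernel-verified Lean document; each statement's English description precedes it below -/
import Mathlib

section
/- Let p be a prime, n ≥ 1, F ∈ ℤ[x₁,…,xₙ], and h ∈ ℤⁿ. Then S(h;p²) = Σ_{y} e((h₁y₁+⋯+hₙyₙ)/p²) · T_p(h, ∇F(y), −F(y)/p), where the outer sum is over those y ∈ {0,1,…,p−1}ⁿ with F(y) ≡ 0 (mod p), ∇F(y) = ((∂F/∂x₁)(y),…,(∂F/∂xₙ)(y)), and −F(y)/p is the integer quotient of −F(y) by p. -/
open scoped BigOperators Classical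

/-- `e(t) = exp(2πit)`. -/
noncomputable def e (t : ℝ) : ℂ := Complex.exp (2 * (Real.pi : ℂ) * Complex.I * (t : ℂ))

/-- The exponential sum `S(h; p²) = ∑_{x ∈ (ℤ/p²ℤ)ⁿ, F(x) ≡ 0 mod p²} e((h·x)/p²)`,
where each coordinate of `x` is lifted to its representative in `{0, …, p²-1}`. -/
noncomputable def expSum (p : ℕ) [NeZero p] (n : ℕ) (F : MvPolynomial (Fin n) ℤ)
    (h : Fin n → ℤ) : ℂ :=
  ∑ x : Fin n → ZMod (p ^ 2),
    if MvPolynomial.eval x (F.map (Int.castRingHom (ZMod (p ^ 2)))) = 0 then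
      e ((((∑ i, h i * ((x i).val : ℤ)) : ℤ) : ℝ) / ((p : ℝ) ^ 2))
    else 0

/-- `T_p(a,b,c) = ∑_{z ∈ 𝔽_pⁿ, b·z ≡ c mod p} e((a·z)/p)`, where each coordinate of `z`
is lifted to its representative in `{0, …, p-1}`. -/
noncomputable def Tsum (p : ℕ) [NeZero p] (n : ℕ) (a b : Fin n → ℤ) (c : ℤ) : ℂ :=
  ∑ z : Fin n → ZMod p,
    if (∑ i, (b i : ZMod p) * z i) = (c : ZMod p) then
      e ((((∑ i, a i * ((z i).val : ℤ)) : ℤ) : ℝ) / (p : ℝ))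
    else 0

open MvPolynomial in
lemma taylor_aux (p : ℕ) {n : ℕ} (F : MvPolynomial (Fin n) ℤ) (y z : Fin n → ℤ) :
    ∃ k : ℤ, MvPolynomial.eval (fun i => y i + p * z i) F =
      MvPolynomial.eval y F + p * ∑ i, MvPolynomial.eval y (MvPolynomial.pderiv i F) * z i
      + p^2 * k := by
  induction F using MvPolynomial.induction_on with
  | C a => exact ⟨0, by simp⟩
  | add f g hf hg =>
    obtain ⟨k1, h1⟩ := hf; obtain ⟨k2, h2⟩ := hg
    refine ⟨k1 + k2, ?_⟩
    simp only [map_add, h1, h2, Finset.sum_add_distrib, add_mul]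
    ring
  | mul_X f i hf =>
    obtain ⟨k, hk⟩ := hf
    refine ⟨k * y i + (∑ j, MvPolynomial.eval y (MvPolynomial.pderiv j f) * z j) * z i + p * k * z i, ?_⟩
    have hsum : ∑ j, MvPolynomial.eval y (MvPolynomial.pderiv j (f * X i)) * z j
        = (∑ j, MvPolynomial.eval y (MvPolynomial.pderiv j f) * z j) * y i
          + MvPolynomial.eval y f * z i := by
      simp only [pderiv_mul, pderiv_X, map_add, map_mul, eval_X, Pi.single_apply,
        apply_ite (MvPolynomial.eval y), map_one, map_zero, mul_ite, mul_one, mul_zero,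
        ite_mul, zero_mul, add_mul, Finset.sum_add_distrib]
      rw [Finset.sum_ite_eq Finset.univ i (fun j => MvPolynomial.eval y f * z j)]
      simp [Finset.sum_mul, Finset.mul_sum, mul_comm, mul_assoc, mul_left_comm]
    simp only [map_mul, eval_X, hk, hsum]
    ring

open MvPolynomial in
lemma eval_cast_aux {n m : ℕ} [NeZero m] (F : MvPolynomial (Fin n) ℤ) (x : Fin n → ZMod m) :
    MvPolynomial.eval x (F.map (Int.castRingHom (ZMod m)))
      = ((MvPolynomial.eval (fun i => ((x i).val : ℤ)) F : ℤ) : ZMod m) := by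
  rw [eval_map]
  have key := MvPolynomial.eval₂_comp_left (Int.castRingHom (ZMod m)) (RingHom.id ℤ)
      (fun i => ((x i).val : ℤ)) F
  simp only [eval₂_id, RingHom.comp_id] at key
  show _ = (Int.castRingHom (ZMod m)) _
  rw [key]
  congr 1
  funext i
  simp [Function.comp, ZMod.natCast_val, ZMod.intCast_cast, ZMod.cast_id]

lemma lift_lt (p : ℕ) [Fact p.Prime] (a b : ZMod p) : a.val + p * b.val < p ^ 2 := by
  have hp : 0 < p := (Fact.out : p.Prime).pos
  have h1 := ZMod.val_lt a
  have h2 : b.val + 1 ≤ p := ZMod.val_lt b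
  calc a.val + p * b.val < p * (b.val + 1) := by nlinarith
  _ ≤ p * p := Nat.mul_le_mul_left _ h2
  _ = p ^ 2 := (sq p).symm

lemma val_lift (p : ℕ) [Fact p.Prime] (a b : ZMod p) :
    (((a.val + p * b.val : ℕ) : ZMod (p^2))).val = a.val + p * b.val :=
  ZMod.val_cast_of_lt (lift_lt p a b)

lemma phi_bij (p : ℕ) [Fact p.Prime] (n : ℕ) :
    Function.Bijective (fun yz : (Fin n → ZMod p) × (Fin n → ZMod p) =>
      (fun i => (((yz.1 i).val + p * (yz.2 i).val : ℕ) : ZMod (p^2)) : Fin n → ZMod (p^2))) := by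
  have hp : 0 < p := (Fact.out : p.Prime).pos
  rw [Fintype.bijective_iff_injective_and_card]
  refine ⟨?_, ?_⟩
  · rintro ⟨y, z⟩ ⟨y', z'⟩ hxy
    have key : ∀ i, (y i).val + p * (z i).val = (y' i).val + p * (z' i).val := by
      intro i
      have hc := congrFun hxy i
      simp only at hc
      have h1 := val_lift p (y i) (z i)
      have h2 := val_lift p (y' i) (z' i)
      rw [← h1, ← h2, hc]
    have hy : ∀ i, (y i).val = (y' i).val := by
      intro i
      have := key i
      have e1 : ((y i).val + p * (z i).val) % p = (y i).val := by
        rw [Nat.add_mul_mod_self_left, Nat.mod_eq_of_lt (ZMod.val_lt _)]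
      have e2 : ((y' i).val + p * (z' i).val) % p = (y' i).val := by
        rw [Nat.add_mul_mod_self_left, Nat.mod_eq_of_lt (ZMod.val_lt _)]
      rw [← e1, ← e2, this]
    have hz : ∀ i, (z i).val = (z' i).val := by
      intro i
      have hki := key i
      rw [hy i] at hki
      exact Nat.eq_of_mul_eq_mul_left hp (Nat.add_left_cancel hki)
    have h1 : y = y' := funext fun i => ZMod.val_injective p (hy i)
    have h2 : z = z' := funext fun i => ZMod.val_injective p (hz i)
    simp_all
  · rw [Fintype.card_prod, Fintype.card_fun, Fintype.card_fun,
      ZMod.card, ZMod.card, Fintype.card_fin, ← pow_add, ← pow_mul, two_mul]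

lemma e_add (s t : ℝ) : e (s + t) = e s * e t := by
  rw [e, e, e, ← Complex.exp_add]
  congr 1
  push_cast
  ring

theorem expSum_eq_sum_Tsum
    (p : ℕ) [Fact p.Prime] (n : ℕ) (hn : 1 ≤ n)
    (F : MvPolynomial (Fin n) ℤ) (h : Fin n → ℤ) :
    expSum p n F h =
      ∑ y : Fin n → ZMod p,
        if MvPolynomial.eval (fun i => ((y i).val : ℤ)) F ≡ 0 [ZMOD (p : ℤ)] then
          e ((((∑ i, h i * ((y i).val : ℤ)) : ℤ) : ℝ) / ((p : ℝ) ^ 2)) *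
            Tsum p n h
              (fun i => MvPolynomial.eval (fun k => ((y k).val : ℤ)) (MvPolynomial.pderiv i F))
              ((-(MvPolynomial.eval (fun k => ((y k).val : ℤ)) F)) / (p : ℤ))
        else 0 := by
  classical
  have hp : 0 < p := (Fact.out : p.Prime).pos
  have hpz : (p : ℤ) ≠ 0 := by exact_mod_cast hp.ne'
  have hpr : (p : ℝ) ≠ 0 := by exact_mod_cast hp.ne'
  have hre : expSum p n F h = ∑ y : Fin n → ZMod p, ∑ z : Fin n → ZMod p,
      (if MvPolynomial.eval (fun i => ((((y i).val + p * ((z i)).val : ℕ)) : ZMod (p^2)))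
            (F.map (Int.castRingHom (ZMod (p ^ 2)))) = 0 then
        e ((((∑ i, h i * ((((((y i)).val + p * ((z i)).val : ℕ) : ZMod (p^2))).val : ℤ)) : ℤ) : ℝ)
          / ((p : ℝ) ^ 2))
      else 0) := by
    rw [expSum, ← Fintype.sum_prod_type']
    exact (Fintype.sum_bijective _ (phi_bij p n) _ _ (fun yz => rfl)).symm
  rw [hre]
  refine Finset.sum_congr rfl fun y _ => ?_
  set Y : Fin n → ℤ := fun i => ((y i).val : ℤ) with hY
  set E : ℤ := MvPolynomial.eval Y F with hEdef
  set D : Fin n → ℤ := fun i => MvPolynomial.eval Y (MvPolynomial.pderiv i F) with hD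
  have hmodeq : (E ≡ 0 [ZMOD (p : ℤ)]) ↔ (p : ℤ) ∣ E := Int.modEq_zero_iff_dvd
  by_cases hE : (p : ℤ) ∣ E
  · obtain ⟨E', hE'⟩ := hE
    rw [if_pos (hmodeq.mpr ⟨E', hE'⟩)]
    have hc : (-E) / (p : ℤ) = -E' := by
      rw [hE', ← mul_neg, Int.mul_ediv_cancel_left _ hpz]
    rw [hc, Tsum, Finset.mul_sum]
    refine Finset.sum_congr rfl fun z _ => ?_
    set Z : Fin n → ℤ := fun i => ((z i).val : ℤ) with hZ
    obtain ⟨k, hk⟩ := taylor_aux p F Y Z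
    rw [← hEdef] at hk
    set A : ℤ := ∑ i, D i * Z i with hA
    -- rewrite the evaluation point
    have hpt : (fun i => (((((((y i)).val + p * ((z i)).val : ℕ) : ZMod (p^2))).val : ℤ)))
        = fun i => Y i + (p : ℤ) * Z i := by
      funext i
      rw [val_lift]
      push_cast
      ring
    have hcond : (MvPolynomial.eval (fun i => ((((y i).val + p * ((z i)).val : ℕ)) : ZMod (p^2)))
          (F.map (Int.castRingHom (ZMod (p ^ 2)))) = 0)
        ↔ ((∑ i, ((D i : ZMod p)) * z i) = (((-E') : ℤ) : ZMod p)) := by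
      rw [eval_cast_aux, hpt, hk, ZMod.intCast_zmod_eq_zero_iff_dvd]
      have hzc : ∀ i, ((Z i : ℤ) : ZMod p) = z i := by
        intro i
        rw [hZ]
        simp [ZMod.natCast_val, ZMod.intCast_cast, ZMod.cast_id]
      have hzm : (∑ i, ((D i : ZMod p)) * z i) = ((A : ℤ) : ZMod p) := by
        rw [hA]
        push_cast
        exact Finset.sum_congr rfl fun i _ => by rw [hzc i]
      rw [hzm, ZMod.intCast_eq_intCast_iff]
      have h1 : (((p^2 : ℕ) : ℤ)) = (p:ℤ)^2 := by push_cast; ring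
      rw [h1]
      constructor
      · intro hd
        have h2 : (p:ℤ)^2 ∣ (p:ℤ) * (E' + A) := by
          have : E + (p:ℤ) * A + (p:ℤ)^2 * k - (p:ℤ)^2 * k = (p:ℤ) * (E' + A) := by
            rw [hE']; ring
          rw [← this]
          exact dvd_sub hd (Dvd.intro k rfl)
        have h3 : (p:ℤ) ∣ E' + A := by
          rcases h2 with ⟨m, hm⟩
          refine ⟨m, ?_⟩
          have : (p:ℤ) * (E' + A) = (p:ℤ) * ((p:ℤ) * m) := by rw [hm]; ring
          exact mul_left_cancel₀ hpz this
        rw [Int.modEq_iff_dvd]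
        rcases h3 with ⟨m, hm⟩
        exact ⟨-m, by rw [mul_neg, ← hm]; ring⟩
      · intro hd
        rw [Int.modEq_iff_dvd] at hd
        rcases hd with ⟨m, hm⟩
        -- -E' - A = p * m
        refine ⟨-m + k, ?_⟩
        linear_combination hE' - (p:ℤ) * hm
    have hsum1 : (∑ i, h i * (((((((y i)).val + p * ((z i)).val : ℕ) : ZMod (p^2))).val : ℤ)))
        = (∑ i, h i * Y i) + (p:ℤ) * ∑ i, h i * Z i := by
      have : ∀ i, h i * (((((((y i)).val + p * ((z i)).val : ℕ) : ZMod (p^2))).val : ℤ))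
          = h i * Y i + (p:ℤ) * (h i * Z i) := by
        intro i
        rw [congrFun hpt i]
        ring
      rw [Finset.sum_congr rfl (fun i _ => this i), Finset.sum_add_distrib, ← Finset.mul_sum]
    have hexp : e (((((∑ i, h i * Y i) + (p:ℤ) * ∑ i, h i * Z i : ℤ)) : ℝ) / ((p : ℝ) ^ 2))
        = e ((((∑ i, h i * Y i : ℤ)) : ℝ) / ((p : ℝ) ^ 2))
          * e ((((∑ i, h i * Z i : ℤ)) : ℝ) / (p : ℝ)) := by
      rw [← e_add]
      congr 1
      push_cast
      field_simp
    rw [hsum1]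
    rw [mul_ite, mul_zero]
    exact if_congr hcond hexp rfl
  · rw [if_neg (fun hc => hE (hmodeq.mp hc))]
    refine Finset.sum_eq_zero fun z _ => ?_
    set Z : Fin n → ℤ := fun i => ((z i).val : ℤ) with hZ
    obtain ⟨k, hk⟩ := taylor_aux p F Y Z
    rw [← hEdef] at hk
    have hpt : (fun i => (((((((y i)).val + p * ((z i)).val : ℕ) : ZMod (p^2))).val : ℤ)))
        = fun i => Y i + (p : ℤ) * Z i := by
      funext i
      rw [val_lift]
      push_cast
      ring
    rw [if_neg]
    intro hc
    rw [eval_cast_aux, hpt, hk, ZMod.intCast_zmod_eq_zero_iff_dvd] at hc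
    apply hE
    have h1 : (((p^2 : ℕ) : ℤ)) = (p:ℤ)^2 := by push_cast; ring
    rw [h1] at hc
    rcases hc with ⟨m, hm⟩
    refine ⟨(p:ℤ) * m - (∑ i, MvPolynomial.eval Y (MvPolynomial.pderiv i F) * Z i) - (p:ℤ) * k, ?_⟩
    linear_combination hm
end

section
/- Let p be a prime, n ≥ 1, F ∈ ℤ[x₁,…,xₙ], h ∈ ℤⁿ, and y ∈ ℤⁿ with F(y) ≡ 0 (mod p). If there exist indices i ≠ j with hᵢ·(∂F/∂xⱼ)(y) ≢ hⱼ·(∂F/∂xᵢ)(y) (mod p), then Σ_{z ∈ 𝔽_pⁿ, F(y+p·z) ≡ 0 mod p²} e((h₁z₁+⋯+hₙzₙ)/p) = 0, where each coordinate of z is lifted to its representative in {0,1,…,p−1}. -/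
open scoped BigOperators Classical
open MvPolynomial Finset

lemma taylor_mod_sq {n : ℕ} (p : ℤ) (F : MvPolynomial (Fin n) ℤ) (y w : Fin n → ℤ) :
    (p ^ 2) ∣ MvPolynomial.eval (fun i => y i + p * w i) F - MvPolynomial.eval y F
      - p * ∑ i, w i * MvPolynomial.eval y (MvPolynomial.pderiv i F) := by
  induction F using MvPolynomial.induction_on with
  | C a => simp
  | add f g hf hg =>
      have := dvd_add hf hg
      convert this using 1
      case e'_2 => rfl
      simp [mul_add, Finset.sum_add_distrib]
      ring
  | mul_X f i hf =>
      obtain ⟨k, hk⟩ := hf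
      have hp : p ∣ MvPolynomial.eval (fun i => y i + p * w i) f - MvPolynomial.eval y f := by
        have : MvPolynomial.eval (fun i => y i + p * w i) f - MvPolynomial.eval y f
            = p * ∑ i, w i * MvPolynomial.eval y (MvPolynomial.pderiv i f) + p^2 * k := by
          linarith [hk]
        rw [this]
        exact dvd_add (Dvd.intro _ rfl) ⟨p * k, by ring⟩
      obtain ⟨m, hm⟩ := hp
      have hexp : ∑ j, w j * MvPolynomial.eval y (MvPolynomial.pderiv j (f * MvPolynomial.X i))
          = (∑ j, w j * MvPolynomial.eval y (MvPolynomial.pderiv j f)) * y i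
            + w i * MvPolynomial.eval y f := by
        have : ∀ j : Fin n, w j * MvPolynomial.eval y (MvPolynomial.pderiv j (f * MvPolynomial.X i))
            = w j * MvPolynomial.eval y (MvPolynomial.pderiv j f) * y i
              + (if i = j then w j * MvPolynomial.eval y f else 0) := by
          intro j
          simp [pderiv_mul, pderiv_X, Pi.single_apply]
          split <;> simp_all <;> ring
        rw [Finset.sum_congr rfl fun j _ => this j, Finset.sum_add_distrib,
          Finset.sum_ite_eq Finset.univ i (fun j => w j * MvPolynomial.eval y f),
          Finset.sum_mul]
        simp
      simp only [eval_mul, eval_X, hexp]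
      refine ⟨y i * k + w i * m, ?_⟩
      linear_combination y i * hk + p * w i * hm

lemma e_add_int (t : ℝ) (m : ℤ) : e (t + m) = e t := by
  unfold e
  push_cast
  rw [mul_add, Complex.exp_add]
  have : Complex.exp (2 * (Real.pi : ℂ) * Complex.I * (m : ℂ)) = 1 := by
    rw [show 2 * (Real.pi : ℂ) * Complex.I * (m : ℂ) = (m : ℤ) * (2 * Real.pi * Complex.I) by push_cast; ring]
    exact Complex.exp_int_mul_two_pi_mul_I m
  rw [this, mul_one]

noncomputable def psi (p : ℕ) (a : ZMod p) : ℂ := e ((a.val : ℝ) / p)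

lemma e_int_div (p : ℕ) [NeZero p] (m : ℤ) : e ((m : ℝ) / p) = psi p (m : ZMod p) := by
  have hdvd : (p : ℤ) ∣ m - ((m : ZMod p).val : ℤ) := by
    rw [← ZMod.intCast_zmod_eq_zero_iff_dvd]
    push_cast
    simp [ZMod.intCast_cast, ZMod.natCast_val]
  obtain ⟨k, hk⟩ := hdvd
  have hm : (m : ℝ) = ((m : ZMod p).val : ℝ) + (p : ℝ) * (k : ℝ) := by
    have : m = ((m : ZMod p).val : ℤ) + p * k := by linarith [hk]
    exact_mod_cast congrArg (Int.cast : ℤ → ℝ) this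
  have hpne : (p:ℝ) ≠ 0 := by exact_mod_cast (NeZero.ne p)
  rw [psi, hm, add_div]
  rw [show (p:ℝ) * (k:ℝ) / p = (k:ℝ) by field_simp]
  rw [e_add_int]

lemma psi_add (p : ℕ) [NeZero p] (a b : ZMod p) : psi p (a + b) = psi p a * psi p b := by
  have h1 : psi p a * psi p b = e (((a.val + b.val : ℤ) : ℝ) / p) := by
    unfold psi e
    rw [← Complex.exp_add]
    congr 1
    push_cast
    ring
  rw [h1, e_int_div]
  congr 1
  push_cast
  simp [ZMod.natCast_val, ZMod.cast_id]

lemma psi_ne_one (p : ℕ) [NeZero p] (a : ZMod p) (ha : a ≠ 0) : psi p a ≠ 1 := by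
  intro hcon
  unfold psi e at hcon
  rw [Complex.exp_eq_one_iff] at hcon
  obtain ⟨k, hk⟩ := hcon
  have hπ : (Real.pi : ℂ) ≠ 0 := by exact_mod_cast Real.pi_ne_zero
  have hI : Complex.I ≠ 0 := Complex.I_ne_zero
  have : ((a.val : ℝ) / p : ℂ) = (k : ℂ) := by
    field_simp at hk ⊢
    have h2 : (2 : ℂ) ≠ 0 := two_ne_zero
    apply mul_left_cancel₀ h2
    apply mul_right_cancel₀ hI
    apply mul_right_cancel₀ hπ
    push_cast at hk
    linear_combination (2 * Complex.I * (Real.pi : ℂ)) * hk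
  have hreal : ((a.val : ℝ) / p) = (k : ℝ) := by exact_mod_cast this
  have hp0 : 0 < (p : ℝ) := by exact_mod_cast Nat.pos_of_ne_zero (NeZero.ne p)
  have h1 : 0 ≤ ((a.val : ℝ) / p) := by positivity
  have h2 : ((a.val : ℝ) / p) < 1 := by
    rw [div_lt_one hp0]
    exact_mod_cast a.val_lt
  rw [hreal] at h1 h2
  have hk0 : k = 0 := by
    have h1' : (0:ℤ) ≤ k := by exact_mod_cast h1
    have h2' : k < 1 := by exact_mod_cast h2
    omega
  rw [hk0] at hreal
  simp only [Int.cast_zero] at hreal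
  have hval : a.val = 0 := by
    have hpne : (p:ℝ) ≠ 0 := by exact_mod_cast NeZero.ne p
    have := div_eq_zero_iff.mp hreal
    rcases this with h | h
    · exact_mod_cast h
    · exact absurd h hpne
  exact ha (((ZMod.val_eq_zero a).mp hval))
theorem inner_sum_eq_zero_of_not_proportional
    (p : ℕ) [Fact p.Prime] (n : ℕ) (hn : 1 ≤ n)
    (F : MvPolynomial (Fin n) ℤ) (h : Fin n → ℤ) (y : Fin n → ℤ)
    (hy : MvPolynomial.eval y F ≡ 0 [ZMOD (p : ℤ)])
    (H : ∃ i j : Fin n, i ≠ j ∧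
      ¬ (h i * MvPolynomial.eval y (MvPolynomial.pderiv j F) ≡
          h j * MvPolynomial.eval y (MvPolynomial.pderiv i F) [ZMOD (p : ℤ)])) :
    (∑ z : Fin n → ZMod p,
      if MvPolynomial.eval (fun i => y i + (p : ℤ) * ((z i).val : ℤ)) F ≡ 0
          [ZMOD (p : ℤ) ^ 2] then
        e ((((∑ i, h i * ((z i).val : ℤ)) : ℤ) : ℝ) / (p : ℝ))
      else 0) = 0 := by
  have hp : p.Prime := Fact.out
  haveI : NeZero p := ⟨hp.pos.ne'⟩
  have hpz : (p : ℤ) ≠ 0 := by exact_mod_cast hp.pos.ne'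
  obtain ⟨c, hc⟩ := (Int.modEq_zero_iff_dvd.mp hy)
  set d : Fin n → ZMod p := fun i => ((MvPolynomial.eval y (MvPolynomial.pderiv i F) : ℤ) : ZMod p) with hd
  set b : Fin n → ZMod p := fun i => ((h i : ℤ) : ZMod p) with hb
  set c0 : ZMod p := ((c : ℤ) : ZMod p) with hc0
  -- condition equivalence
  have hcond : ∀ z : Fin n → ZMod p,
      (MvPolynomial.eval (fun i => y i + (p : ℤ) * ((z i).val : ℤ)) F ≡ 0 [ZMOD (p : ℤ) ^ 2])
        ↔ (c0 + ∑ i, z i * d i = 0) := by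
    intro z
    obtain ⟨k, hk⟩ := taylor_mod_sq (p : ℤ) F y (fun i => ((z i).val : ℤ))
    rw [Int.modEq_zero_iff_dvd]
    have hE : MvPolynomial.eval (fun i => y i + (p : ℤ) * ((z i).val : ℤ)) F
        = (p : ℤ) * (c + ∑ i, ((z i).val : ℤ) * MvPolynomial.eval y (MvPolynomial.pderiv i F))
          + (p : ℤ)^2 * k := by linarith [hk, hc]
    rw [hE]
    constructor
    · intro hdvd
      have h1 : (p : ℤ)^2 ∣ (p : ℤ) * (c + ∑ i, ((z i).val : ℤ) * MvPolynomial.eval y (MvPolynomial.pderiv i F)) := by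
        have := hdvd.sub (Dvd.intro k rfl)
        simpa using this
      have h2 : (p : ℤ) ∣ c + ∑ i, ((z i).val : ℤ) * MvPolynomial.eval y (MvPolynomial.pderiv i F) := by
        rw [pow_two] at h1
        exact (mul_dvd_mul_iff_left hpz).mp h1
      have h3 := (ZMod.intCast_zmod_eq_zero_iff_dvd _ p).mpr h2
      rw [← h3]
      push_cast
      simp [hd, hc0, ZMod.natCast_val, ZMod.intCast_cast, ZMod.cast_id]
    · intro heq
      have h2 : (p : ℤ) ∣ c + ∑ i, ((z i).val : ℤ) * MvPolynomial.eval y (MvPolynomial.pderiv i F) := by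
        rw [← ZMod.intCast_zmod_eq_zero_iff_dvd]
        rw [← heq]
        push_cast
        simp [hd, hc0, ZMod.natCast_val, ZMod.intCast_cast, ZMod.cast_id]
      obtain ⟨m, hm⟩ := h2
      rw [hm]
      exact dvd_add ⟨m, by ring⟩ (Dvd.intro k rfl)
  -- value equivalence
  have hval : ∀ z : Fin n → ZMod p,
      e ((((∑ i, h i * ((z i).val : ℤ)) : ℤ) : ℝ) / (p : ℝ)) = psi p (∑ i, b i * z i) := by
    intro z
    rw [e_int_div]
    congr 1
    push_cast
    refine Finset.sum_congr rfl fun i _ => ?_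
    simp [hb, ZMod.natCast_val, ZMod.cast_id]
  rw [Finset.sum_congr rfl fun z _ => if_congr (hcond z) (hval z) rfl]
  set S := ∑ z : Fin n → ZMod p,
      if c0 + ∑ i, z i * d i = 0 then psi p (∑ i, b i * z i) else 0 with hS
  -- non-proportionality in ZMod p
  obtain ⟨i, j, hij, hprop⟩ := H
  have hbd : b i * d j ≠ b j * d i := by
    intro hcon
    apply hprop
    have hcast : ((h i * MvPolynomial.eval y (MvPolynomial.pderiv j F) : ℤ) : ZMod p)
        = ((h j * MvPolynomial.eval y (MvPolynomial.pderiv i F) : ℤ) : ZMod p) := by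
      push_cast
      simpa [hb, hd] using hcon
    exact (ZMod.intCast_eq_intCast_iff _ _ _).mp hcast
  -- translation vector
  set v : Fin n → ZMod p := fun k => if k = i then d j else if k = j then -(d i) else 0 with hv
  have hvd : ∑ k, v k * d k = 0 := by
    have hpt : ∀ k, v k * d k
        = (if k = i then d j * d i else 0) + (if k = j then -(d i) * d j else 0) := by
      intro k
      by_cases h1 : k = i
      · subst h1; simp [hv, hij]
      · by_cases h2 : k = j
        · subst h2; simp [hv, h1]
        · simp [hv, h1, h2]
    rw [Finset.sum_congr rfl fun k _ => hpt k, Finset.sum_add_distrib]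
    simp [Finset.sum_ite_eq']
    ring
  have hvb : ∑ k, b k * v k = b i * d j - b j * d i := by
    have hpt : ∀ k, b k * v k
        = (if k = i then b i * d j else 0) + (if k = j then -(b j * d i) else 0) := by
      intro k
      by_cases h1 : k = i
      · subst h1; simp [hv, hij]
      · by_cases h2 : k = j
        · subst h2; simp [hv, h1]
        · simp [hv, h1, h2]
    rw [Finset.sum_congr rfl fun k _ => hpt k, Finset.sum_add_distrib]
    simp [Finset.sum_ite_eq']
    ring
  have hvb_ne : ∑ k, b k * v k ≠ 0 := by
    rw [hvb]
    exact sub_ne_zero_of_ne hbd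
  -- translation identity
  have htrans : S = psi p (∑ k, b k * v k) * S := by
    rw [hS]
    rw [Finset.mul_sum]
    rw [← Fintype.sum_equiv (Equiv.addRight v) _ _ (fun z => rfl)]
    refine Finset.sum_congr rfl fun z _ => ?_
    have hcond2 : (c0 + ∑ k, (z + v) k * d k = 0) ↔ (c0 + ∑ k, z k * d k = 0) := by
      have : ∑ k, (z + v) k * d k = ∑ k, z k * d k + ∑ k, v k * d k := by
        rw [← Finset.sum_add_distrib]
        refine Finset.sum_congr rfl fun k _ => ?_
        simp [add_mul]
      rw [this, hvd, add_zero]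
    have hval2 : psi p (∑ k, b k * (z + v) k)
        = psi p (∑ k, b k * v k) * psi p (∑ k, b k * z k) := by
      have : ∑ k, b k * (z + v) k = ∑ k, b k * z k + ∑ k, b k * v k := by
        rw [← Finset.sum_add_distrib]
        refine Finset.sum_congr rfl fun k _ => ?_
        simp [mul_add]
      rw [this, psi_add]
      ring
    simp only [Equiv.coe_addRight]
    simp only [hcond2, hval2]
    rw [mul_ite, mul_zero]
  have hfinal : (1 - psi p (∑ k, b k * v k)) * S = 0 := by
    rw [sub_mul, one_mul, ← htrans, sub_self]
  rcases mul_eq_zero.mp hfinal with hcase | hcase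
  · exact absurd (by linear_combination -hcase : psi p (∑ k, b k * v k) = 1)
      (psi_ne_one p _ hvb_ne)
  · exact hcase
end
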